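/- arXiv:2101.01253 — 4 statements merged into one kernel-verified Lean document; each statement's English description precedes it below -/
import Mathlib

section
/- Let (X, 𝒳) be a measurable space, μ a σ-finite measure on X, and φ : X → X a measurable map with φ ∘ φ = id. Suppose the pushforward measure μ^φ := μ ∘ φ⁻¹ and μ are mutually absolutely continuous, and let r be a measurable version of the Radon–Nikodym derivative dμ^φ/dμ. Then r(x) · r(φ(x)) = 1 for μ-almost every x ∈ X. -/
open MeasureTheory
open scoped ENNReal

/-! If `μ.map φ = μ.withDensity r`, pushing this identity forward by the involution `φ` gives
`μ = (μ.map φ).withDensity (r ∘ φ) = μ.withDensity (r * r ∘ φ)`. Densities with respect to a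
σ-finite measure are unique up to null sets, so `r * r ∘ φ = 1` almost everywhere. -/

namespace MeasureTheory

variable {α β : Type*} [MeasurableSpace α] [MeasurableSpace β]

theorem _root_.MeasurableEquiv.map_withDensity (e : α ≃ᵐ β) (μ : Measure α) (f : α → ℝ≥0∞) :
    (μ.withDensity f).map e = (μ.map e).withDensity (f ∘ e.symm) := by
  ext s hs
  rw [e.map_apply, withDensity_apply _ (e.measurable hs), withDensity_apply _ hs, e.restrict_map,
    lintegral_map_equiv]
  simp

theorem ae_eq_one_of_withDensity_eq_self {μ : Measure α} [SigmaFinite μ] {f : α → ℝ≥0∞}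
    (hf : AEMeasurable f μ) (h : μ.withDensity f = μ) : f =ᵐ[μ] 1 := by
  rwa [← withDensity_eq_iff_of_sigmaFinite hf (g := 1) aemeasurable_one, withDensity_one]

theorem withDensity_mul_comp_eq_self_of_map_eq_withDensity {μ : Measure α} {φ : α → α}
    (hφ : Measurable φ) (hinv : Function.Involutive φ) {r : α → ℝ≥0∞} (hr : Measurable r)
    (hmap : μ.map φ = μ.withDensity r) : μ.withDensity (r * (r ∘ φ)) = μ := by
  let e := MeasurableEquiv.ofInvolutive φ hinv hφ
  calc μ.withDensity (r * (r ∘ φ))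
      = (μ.withDensity r).withDensity (r ∘ φ) := withDensity_mul μ hr (hr.comp hφ)
    _ = (μ.map e).withDensity (r ∘ e.symm) := by rw [← hmap]; rfl
    _ = (μ.withDensity r).map e := (e.map_withDensity μ r).symm
    _ = (μ.map φ).map φ := by rw [← hmap]; rfl
    _ = μ := by rw [Measure.map_map hφ hφ, hinv.comp_self, Measure.map_id]

end MeasureTheory

theorem reciprocity_of_acceptance_ratio_general
    {X : Type*} [MeasurableSpace X] (μ : Measure X) [SigmaFinite μ]
    (φ : X → X) (hφ : Measurable φ) (hinv : φ ∘ φ = id)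
    (r : X → ℝ≥0∞) (hr : Measurable r)
    (hrd : ∀ A : Set X, MeasurableSet A → ∫⁻ x in A, r x ∂μ = μ.map φ A) :
    ∀ᵐ x ∂μ, r x * r (φ x) = 1 := by
  have hmap : μ.map φ = μ.withDensity r := by
    ext A hA
    rw [withDensity_apply _ hA, hrd A hA]
  exact ae_eq_one_of_withDensity_eq_self (hr.mul (hr.comp hφ)).aemeasurable
    (withDensity_mul_comp_eq_self_of_map_eq_withDensity hφ (congrFun hinv) hr hmap)

/-- Let `μ` be a σ-finite measure on `X` and `φ : X → X` a measurable
involution (`φ ∘ φ = id`). Suppose the pushforward `μ.map φ` and `μ` are mutually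
absolutely continuous, and let `r` be a measurable version of the Radon–Nikodym
derivative `d(μ.map φ)/dμ` (in the sense that `∫⁻ x in A, r x ∂μ = (μ.map φ) A` for
every measurable set `A`). Then `r x * r (φ x) = 1` for `μ`-almost every `x`. -/
theorem reciprocity_of_acceptance_ratio
    {X : Type*} [MeasurableSpace X] (μ : Measure X) [SigmaFinite μ]
    (φ : X → X) (hφ : Measurable φ) (hinv : φ ∘ φ = id)
    (hac₁ : μ.map φ ≪ μ) (hac₂ : μ ≪ μ.map φ)
    (r : X → ℝ≥0∞) (hr : Measurable r)
    (hrd : ∀ A : Set X, MeasurableSet A → ∫⁻ x in A, r x ∂μ = μ.map φ A) :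
    ∀ᵐ x ∂μ, r x * r (φ x) = 1 :=
  reciprocity_of_acceptance_ratio_general μ φ hφ hinv r hr hrd
end

section
/- Let (U, 𝒰, Q) be a probability space and r : U → [0,∞) a measurable Q-integrable function. Then for every integer N ≥ 1, ∫_{U^N} min{1, N⁻¹ Σ_{i=1}^N r(u_i)} Q^{⊗N}(d(u_1,…,u_N)) ≤ ∫_{U^{N+1}} min{1, (N+1)⁻¹ Σ_{i=1}^{N+1} r(u_i)} Q^{⊗(N+1)}(d(u_1,…,u_{N+1})), i.e. the expected acceptance probability of the averaged acceptance-ratio estimator is nondecreasing in the number N of independent replicates. -/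
/-!
The mean of `N + 1` samples is the average of its `N + 1` leave-one-out means, and each
leave-one-out mean is a mean of `N` independent samples. Since `x ↦ min 1 x` is concave, the
average of the `N + 1` leave-one-out acceptance probabilities is at most the acceptance probability
of the full mean; integrating and using that every leave-one-out term has the `N`-sample law
gives the inequality.
-/

open MeasureTheory Finset

noncomputable def averagedAcceptance {U ι : Type*} [Fintype ι] (r : U → ℝ) (u : ι → U) : ℝ :=
  min 1 ((Fintype.card ι : ℝ)⁻¹ * ∑ i, r (u i))

theorem Fin.sum_sum_succAbove {M : Type*} [AddCommGroup M] {n : ℕ} (x : Fin (n + 1) → M) :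
    ∑ j : Fin (n + 1), ∑ i : Fin n, x (j.succAbove i) = n • ∑ i, x i := by
  have hdrop (j : Fin (n + 1)) : ∑ i, x (j.succAbove i) = ∑ i, x i - x j := by
    rw [Fin.sum_univ_succAbove x j]
    abel
  simp only [hdrop, sum_sub_distrib, sum_const, succ_nsmul, add_sub_cancel_right]

theorem Finset.sum_min_le_min_sum {ι α : Type*} [AddCommMonoid α] [LinearOrder α]
    [IsOrderedAddMonoid α] (s : Finset ι) (c : α) (a : ι → α) :
    ∑ j ∈ s, min c (a j) ≤ min (#s • c) (∑ j ∈ s, a j) :=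
  le_min ((sum_le_sum fun j _ => min_le_left c (a j)).trans_eq (sum_const c))
    (sum_le_sum fun j _ => min_le_right c (a j))

theorem sum_averagedAcceptance_removeNth_le {U : Type*} (r : U → ℝ) {n : ℕ} (hn : n ≠ 0)
    (u : Fin (n + 1) → U) :
    ∑ j : Fin (n + 1), averagedAcceptance r (j.removeNth u)
      ≤ (n + 1) * averagedAcceptance r u := by
  have hn' : (n : ℝ) ≠ 0 := Nat.cast_ne_zero.mpr hn
  have hn1 : (n : ℝ) + 1 ≠ 0 := by positivity
  simp only [averagedAcceptance, Fin.removeNth_apply, Fintype.card_fin, Nat.cast_succ]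
  calc ∑ j : Fin (n + 1), min 1 ((n : ℝ)⁻¹ * ∑ i, r (u (j.succAbove i)))
      ≤ min (#univ • 1) (∑ j : Fin (n + 1), (n : ℝ)⁻¹ * ∑ i, r (u (j.succAbove i))) :=
        sum_min_le_min_sum _ _ _
    _ = min ((n : ℝ) + 1) (∑ i, r (u i)) := by
        rw [← mul_sum, Fin.sum_sum_succAbove (fun i => r (u i)), nsmul_eq_mul, nsmul_eq_mul,
          inv_mul_cancel_left₀ hn']
        simp
    _ = (n + 1) * min 1 (((n : ℝ) + 1)⁻¹ * ∑ i, r (u i)) := by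
        rw [mul_min_of_nonneg _ _ (by positivity), mul_one, mul_inv_cancel_left₀ hn1]

theorem measurePreserving_removeNth {n : ℕ} {α : Fin (n + 1) → Type*}
    [∀ i, MeasurableSpace (α i)] (μ : ∀ i, Measure (α i)) [∀ i, IsProbabilityMeasure (μ i)]
    (j : Fin (n + 1)) :
    MeasurePreserving (Fin.removeNth j) (Measure.pi μ)
      (Measure.pi fun i => μ (j.succAbove i)) :=
  (measurePreserving_snd (μ := μ j)).comp (measurePreserving_piFinSuccAbove μ j)

theorem MeasureTheory.MeasurePreserving.integral_comp_of_aestronglyMeasurable {α β E : Type*}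
    [MeasurableSpace α] [MeasurableSpace β] [NormedAddCommGroup E] [NormedSpace ℝ E]
    {μ : Measure α} {ν : Measure β} {f : α → β} (hf : MeasurePreserving f μ ν) {g : β → E}
    (hg : AEStronglyMeasurable g ν) :
    ∫ x, g (f x) ∂μ = ∫ y, g y ∂ν := by
  rw [← hf.map_eq] at hg ⊢
  exact (integral_map hf.aemeasurable hg).symm

theorem integrable_averagedAcceptance {U ι : Type*} [MeasurableSpace U] [Fintype ι]
    {Q : Measure U} [IsProbabilityMeasure Q] {r : U → ℝ} (hr : Integrable r Q) :
    Integrable (averagedAcceptance (ι := ι) r) (Measure.pi fun _ => Q) :=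
  (integrable_const 1).inf ((integrable_finsetSum _ fun i _ =>
    (measurePreserving_eval _ i).integrable_comp_of_integrable hr).const_mul _)

theorem integral_averagedAcceptance_le_succ {U : Type*} [MeasurableSpace U]
    {Q : Measure U} [IsProbabilityMeasure Q] {r : U → ℝ} (hr : Integrable r Q) {n : ℕ}
    (hn : n ≠ 0) :
    ∫ u : Fin n → U, averagedAcceptance r u ∂(Measure.pi fun _ => Q)
      ≤ ∫ u : Fin (n + 1) → U, averagedAcceptance r u ∂(Measure.pi fun _ => Q) := by
  set μ : Measure (Fin (n + 1) → U) := Measure.pi fun _ => Q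
  have hA := integrable_averagedAcceptance (ι := Fin n) hr
  have hmp (j : Fin (n + 1)) := measurePreserving_removeNth (fun _ => Q) j
  have hAj (j : Fin (n + 1)) :
      Integrable (fun u : Fin (n + 1) → U => averagedAcceptance r (j.removeNth u)) μ :=
    (hmp j).integrable_comp_of_integrable hA
  have hleave (j : Fin (n + 1)) :
      ∫ u, averagedAcceptance r (j.removeNth u) ∂μ
        = ∫ u : Fin n → U, averagedAcceptance r u ∂(Measure.pi fun _ => Q) :=
    (hmp j).integral_comp_of_aestronglyMeasurable hA.aestronglyMeasurable
  have hn1 : (0 : ℝ) < n + 1 := by positivity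
  calc ∫ u : Fin n → U, averagedAcceptance r u ∂(Measure.pi fun _ => Q)
      = ((n : ℝ) + 1)⁻¹ * ∑ j : Fin (n + 1), ∫ u, averagedAcceptance r (j.removeNth u) ∂μ := by
        simp only [hleave, sum_const, card_univ, Fintype.card_fin, nsmul_eq_mul, Nat.cast_succ,
          inv_mul_cancel_left₀ hn1.ne']
    _ = ((n : ℝ) + 1)⁻¹ * ∫ u, ∑ j : Fin (n + 1), averagedAcceptance r (j.removeNth u) ∂μ := by
        rw [integral_finsetSum _ fun j _ => hAj j]
    _ ≤ ((n : ℝ) + 1)⁻¹ * ∫ u, (n + 1) * averagedAcceptance r u ∂μ := by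
        refine mul_le_mul_of_nonneg_left (integral_mono ?_ ?_ fun u => ?_) (by positivity)
        · exact integrable_finsetSum _ fun j _ => hAj j
        · exact (integrable_averagedAcceptance hr).const_mul _
        · exact sum_averagedAcceptance_removeNth_le r hn u
    _ = ∫ u, averagedAcceptance r u ∂μ := by
        rw [integral_const_mul, inv_mul_cancel_left₀ hn1.ne']

theorem averaged_acceptance_monotone_general
    {U : Type*} [MeasurableSpace U] (Q : Measure U) [IsProbabilityMeasure Q]
    (r : U → ℝ) (hri : Integrable r Q)
    (N : ℕ) (hN : 1 ≤ N) :
    ∫ u : Fin N → U, min 1 ((N : ℝ)⁻¹ * ∑ i, r (u i)) ∂(Measure.pi fun _ => Q)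
      ≤ ∫ u : Fin (N + 1) → U, min 1 (((N : ℝ) + 1)⁻¹ * ∑ i, r (u i))
          ∂(Measure.pi fun _ => Q) := by
  have key := integral_averagedAcceptance_le_succ hri (Nat.one_le_iff_ne_zero.mp hN)
  simp only [averagedAcceptance, Fintype.card_fin, Nat.cast_succ] at key
  exact key

/-- For a probability measure `Q` on `U` and a nonnegative measurable
`Q`-integrable function `r : U → [0,∞)`, the expected Metropolis–Hastings acceptance
probability of the averaged acceptance-ratio estimator,
`∫ min{1, N⁻¹ ∑ᵢ r(uᵢ)} dQ^{⊗N}`, is nondecreasing in the number `N ≥ 1`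
of independent replicates. -/
theorem averaged_acceptance_monotone
    {U : Type*} [MeasurableSpace U] (Q : Measure U) [IsProbabilityMeasure Q]
    (r : U → ℝ) (hrm : Measurable r) (hr0 : ∀ u, 0 ≤ r u) (hri : Integrable r Q)
    (N : ℕ) (hN : 1 ≤ N) :
    ∫ u : Fin N → U, min 1 ((N : ℝ)⁻¹ * ∑ i, r (u i)) ∂(Measure.pi fun _ => Q)
      ≤ ∫ u : Fin (N + 1) → U, min 1 (((N : ℝ) + 1)⁻¹ * ∑ i, r (u i))
          ∂(Measure.pi fun _ => Q) :=
  averaged_acceptance_monotone_general Q r hri N hN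
end

section
/- With D, φ* and r_u as in the context: the map φ* is an involution of X := Θ² × Z × U^N × {1,…,N} × {1,2}, and for every ξ = (θ,ϑ,z,𝔲,k,c) ∈ X one has D(φ*(ξ)) = r̊(ξ) · D(ξ), where r̊(ξ) := r^N_𝔲(θ,ϑ,z) if c = 1, and r̊(ξ) := 1 / r^N_{𝔲'}(ϑ,θ,z') if c = 2, with (ϑ,θ,z',𝔲',k,1) := φ*(ξ). In particular the Metropolis–Hastings acceptance ratio of the MHAAR update equals the averaged acceptance ratio r^N_𝔲(θ,ϑ,z) when c = 1 and its reciprocal at the transformed point when c = 2. -/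
/-!
With the extended density `w(θ,ϑ,z,u) = π(θ,z) q(θ,ϑ) Q(θ,ϑ,z,u)` one has
`r_u(θ,ϑ,z) = w(ϑ,θ,φ_{θ,ϑ}(z,u)) / w(θ,ϑ,z,u)`. Hence both branches of `D` are
`½ N⁻¹` times the weight `w` of one pair `(z,u)` times a product of `Q` over the indices
`i ≠ k`, the `c = 1` branch being further divided by `r^N`. The map `φ*` swaps the two
branches, exchanges the two weights because `φ_{ϑ,θ} ∘ φ_{θ,ϑ} = id`, and leaves the
coordinates `i ≠ k` alone, so `D(φ* ξ) / D(ξ)` is `r^N` or its reciprocal.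
-/

open MeasureTheory Finset

namespace MHAAR

variable {Θ Z U : Type*}

/-- The single-sample acceptance ratio `r_u(θ,ϑ,z)` associated with the joint density
`π(θ,z) q(θ,ϑ) Q(θ,ϑ,z,u)` and the involution `(θ,ϑ,z,u) ↦ (ϑ,θ,φ_{θ,ϑ}(z,u))`. -/
noncomputable def rU (π : Θ → Z → ℝ) (q : Θ → Θ → ℝ) (Q : Θ → Θ → Z → U → ℝ)
    (φ : Θ → Θ → Z × U → Z × U) (θ ϑ : Θ) (z : Z) (u : U) : ℝ :=
  π ϑ (φ θ ϑ (z, u)).1 * q ϑ θ * Q ϑ θ (φ θ ϑ (z, u)).1 (φ θ ϑ (z, u)).2 /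
    (π θ z * q θ ϑ * Q θ ϑ z u)

/-- The averaged acceptance ratio `r^N_𝔲(θ,ϑ,z) = N⁻¹ ∑ᵢ r_{u⁽ⁱ⁾}(θ,ϑ,z)`. -/
noncomputable def rAvg (N : ℕ) (π : Θ → Z → ℝ) (q : Θ → Θ → ℝ)
    (Q : Θ → Θ → Z → U → ℝ) (φ : Θ → Θ → Z × U → Z × U)
    (θ ϑ : Θ) (z : Z) (𝔲 : Fin N → U) : ℝ :=
  (N : ℝ)⁻¹ * ∑ i, rU π q Q φ θ ϑ z (𝔲 i)

/-- The density `D` of the MHAAR joint distribution `π̊` on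
`X = Θ² × Z × Uᴺ × {1,…,N} × {1,2}` (here `c = 0` codes `c = 1` and `c = 1` codes
`c = 2`). -/
noncomputable def D (N : ℕ) (π : Θ → Z → ℝ) (q : Θ → Θ → ℝ)
    (Q : Θ → Θ → Z → U → ℝ) (φ : Θ → Θ → Z × U → Z × U)
    (ξ : Θ × Θ × Z × (Fin N → U) × Fin N × Fin 2) : ℝ :=
  match ξ with
  | (θ, ϑ, z, 𝔲, k, c) =>
    2⁻¹ * π θ z * q θ ϑ *
      (if c = 0 then
        (∏ i, Q θ ϑ z (𝔲 i)) *
          ((N : ℝ)⁻¹ * rU π q Q φ θ ϑ z (𝔲 k) / rAvg N π q Q φ θ ϑ z 𝔲)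
      else
        (N : ℝ)⁻¹ * Q θ ϑ z (𝔲 k) *
          ∏ i ∈ univ.erase k, Q ϑ θ (φ θ ϑ (z, 𝔲 k)).1 (𝔲 i))

/-- The MHAAR map `φ*`. -/
noncomputable def phiStar (N : ℕ) (φ : Θ → Θ → Z × U → Z × U)
    (ξ : Θ × Θ × Z × (Fin N → U) × Fin N × Fin 2) :
    Θ × Θ × Z × (Fin N → U) × Fin N × Fin 2 :=
  match ξ with
  | (θ, ϑ, z, 𝔲, k, c) =>
    (ϑ, θ, (φ θ ϑ (z, 𝔲 k)).1, Function.update 𝔲 k (φ θ ϑ (z, 𝔲 k)).2, k, 1 - c)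

/-- The MHAAR acceptance ratio `r̊(ξ)`: the averaged ratio `r^N_𝔲(θ,ϑ,z)` if `c = 1`,
and `1 / r^N_{𝔲'}(ϑ,θ,z')` with `(ϑ,θ,z',𝔲',k,1) = φ*(ξ)` if `c = 2`. -/
noncomputable def rMHAAR (N : ℕ) (π : Θ → Z → ℝ) (q : Θ → Θ → ℝ)
    (Q : Θ → Θ → Z → U → ℝ) (φ : Θ → Θ → Z × U → Z × U)
    (ξ : Θ × Θ × Z × (Fin N → U) × Fin N × Fin 2) : ℝ :=
  match ξ with
  | (θ, ϑ, z, 𝔲, k, c) =>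
    if c = 0 then rAvg N π q Q φ θ ϑ z 𝔲
    else
      (rAvg N π q Q φ ϑ θ (φ θ ϑ (z, 𝔲 k)).1
          (Function.update 𝔲 k (φ θ ϑ (z, 𝔲 k)).2))⁻¹

section

variable (π : Θ → Z → ℝ) (q : Θ → Θ → ℝ) (Q : Θ → Θ → Z → U → ℝ)

noncomputable def jointDensity (θ ϑ : Θ) (z : Z) (u : U) : ℝ :=
  π θ z * q θ ϑ * Q θ ϑ z u

variable {π q Q}

lemma rU_eq_jointDensity_div (φ : Θ → Θ → Z × U → Z × U) (θ ϑ : Θ) (z : Z) (u : U) :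
    rU π q Q φ θ ϑ z u =
      jointDensity π q Q ϑ θ (φ θ ϑ (z, u)).1 (φ θ ϑ (z, u)).2 /
        jointDensity π q Q θ ϑ z u :=
  rfl

variable (hπ : ∀ θ z, 0 < π θ z) (hq : ∀ θ ϑ, 0 < q θ ϑ) (hQ : ∀ θ ϑ z u, 0 < Q θ ϑ z u)
include hπ hq hQ

lemma jointDensity_pos (θ ϑ : Θ) (z : Z) (u : U) : 0 < jointDensity π q Q θ ϑ z u :=
  mul_pos (mul_pos (hπ θ z) (hq θ ϑ)) (hQ θ ϑ z u)

lemma rU_pos (φ : Θ → Θ → Z × U → Z × U) (θ ϑ : Θ) (z : Z) (u : U) :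
    0 < rU π q Q φ θ ϑ z u :=
  div_pos (jointDensity_pos hπ hq hQ ..) (jointDensity_pos hπ hq hQ ..)

lemma rAvg_pos {N : ℕ} (hN : 0 < N) (φ : Θ → Θ → Z × U → Z × U) (θ ϑ : Θ) (z : Z)
    (𝔲 : Fin N → U) : 0 < rAvg N π q Q φ θ ϑ z 𝔲 :=
  mul_pos (inv_pos.2 (Nat.cast_pos.2 hN)) <|
    sum_pos (fun i _ => rU_pos hπ hq hQ φ θ ϑ z (𝔲 i)) ⟨⟨0, hN⟩, mem_univ _⟩

lemma D_of_c_eq_zero {N : ℕ} (φ : Θ → Θ → Z × U → Z × U) (θ ϑ : Θ) (z : Z)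
    (𝔲 : Fin N → U) (k : Fin N) :
    D N π q Q φ (θ, ϑ, z, 𝔲, k, 0) =
      2⁻¹ * (N : ℝ)⁻¹ * jointDensity π q Q ϑ θ (φ θ ϑ (z, 𝔲 k)).1 (φ θ ϑ (z, 𝔲 k)).2 *
        (∏ i ∈ univ.erase k, Q θ ϑ z (𝔲 i)) / rAvg N π q Q φ θ ϑ z 𝔲 := by
  simp only [D, if_true, ← mul_prod_erase univ _ (mem_univ k), rU_eq_jointDensity_div,
    jointDensity]
  field_simp [(hπ θ z).ne', (hq θ ϑ).ne', (hQ θ ϑ z (𝔲 k)).ne']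

end

lemma D_of_c_eq_one {N : ℕ} (π : Θ → Z → ℝ) (q : Θ → Θ → ℝ) (Q : Θ → Θ → Z → U → ℝ)
    (φ : Θ → Θ → Z × U → Z × U) (θ ϑ : Θ) (z : Z) (𝔲 : Fin N → U) (k : Fin N) :
    D N π q Q φ (θ, ϑ, z, 𝔲, k, 1) =
      2⁻¹ * (N : ℝ)⁻¹ * jointDensity π q Q θ ϑ z (𝔲 k) *
        ∏ i ∈ univ.erase k, Q ϑ θ (φ θ ϑ (z, 𝔲 k)).1 (𝔲 i) := by
  simp only [D, jointDensity, one_ne_zero, if_false]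
  ring

lemma prod_erase_comp_update {ι α M : Type*} [DecidableEq ι] [Fintype ι] [CommMonoid M]
    (f : α → M) (g : ι → α) (k : ι) (a : α) :
    ∏ i ∈ univ.erase k, f (Function.update g k a i) = ∏ i ∈ univ.erase k, f (g i) := by
  simp only [← Function.comp_apply (f := f), Function.comp_update,
    prod_update_of_notMem (notMem_erase k univ)]

section

variable {φ : Θ → Θ → Z × U → Z × U} (hφ : ∀ θ ϑ p, φ ϑ θ (φ θ ϑ p) = p)
include hφ

lemma phiStar_phiStar {N : ℕ} (ξ : Θ × Θ × Z × (Fin N → U) × Fin N × Fin 2) :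
    phiStar N φ (phiStar N φ ξ) = ξ := by
  obtain ⟨θ, ϑ, z, 𝔲, k, c⟩ := ξ
  simp only [phiStar, Function.update_self, Prod.mk.eta, hφ, Function.update_idem,
    Function.update_eq_self, sub_sub_cancel]

variable {π : Θ → Z → ℝ} {q : Θ → Θ → ℝ} {Q : Θ → Θ → Z → U → ℝ}
  (hπ : ∀ θ z, 0 < π θ z) (hq : ∀ θ ϑ, 0 < q θ ϑ) (hQ : ∀ θ ϑ z u, 0 < Q θ ϑ z u)
include hπ hq hQ

lemma D_phiStar_of_c_eq_zero {N : ℕ} (θ ϑ : Θ) (z : Z) (𝔲 : Fin N → U) (k : Fin N) :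
    D N π q Q φ (phiStar N φ (θ, ϑ, z, 𝔲, k, 0)) =
      rAvg N π q Q φ θ ϑ z 𝔲 * D N π q Q φ (θ, ϑ, z, 𝔲, k, 0) := by
  have hR := (rAvg_pos hπ hq hQ k.pos φ θ ϑ z 𝔲).ne'
  rw [phiStar, sub_zero, D_of_c_eq_one, D_of_c_eq_zero hπ hq hQ, Function.update_self,
    Prod.mk.eta, hφ, prod_erase_comp_update]
  field_simp

lemma D_phiStar_of_c_eq_one {N : ℕ} (θ ϑ : Θ) (z : Z) (𝔲 : Fin N → U) (k : Fin N) :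
    D N π q Q φ (phiStar N φ (θ, ϑ, z, 𝔲, k, 1)) =
      (rAvg N π q Q φ ϑ θ (φ θ ϑ (z, 𝔲 k)).1 (Function.update 𝔲 k (φ θ ϑ (z, 𝔲 k)).2))⁻¹ *
        D N π q Q φ (θ, ϑ, z, 𝔲, k, 1) := by
  rw [phiStar, sub_self, D_of_c_eq_zero hπ hq hQ, D_of_c_eq_one, Function.update_self,
    Prod.mk.eta, hφ, prod_erase_comp_update]
  ring

end

theorem mhaar_involution_and_acceptance_ratio_general
    (N : ℕ)
    (π : Θ → Z → ℝ)
    (hπpos : ∀ θ z, 0 < π θ z)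
    (q : Θ → Θ → ℝ)
    (hqpos : ∀ θ ϑ, 0 < q θ ϑ)
    (Q : Θ → Θ → Z → U → ℝ)
    (hQpos : ∀ θ ϑ z u, 0 < Q θ ϑ z u)
    (φ : Θ → Θ → Z × U → Z × U)
    (hφinv : ∀ θ ϑ p, φ ϑ θ (φ θ ϑ p) = p) :
    (∀ ξ : Θ × Θ × Z × (Fin N → U) × Fin N × Fin 2,
        phiStar N φ (phiStar N φ ξ) = ξ) ∧
      (∀ ξ : Θ × Θ × Z × (Fin N → U) × Fin N × Fin 2,
        D N π q Q φ (phiStar N φ ξ) = rMHAAR N π q Q φ ξ * D N π q Q φ ξ) := by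
  refine ⟨phiStar_phiStar hφinv, ?_⟩
  rintro ⟨θ, ϑ, z, 𝔲, k, c⟩
  fin_cases c
  · exact D_phiStar_of_c_eq_zero hφinv hπpos hqpos hQpos θ ϑ z 𝔲 k
  · exact D_phiStar_of_c_eq_one hφinv hπpos hqpos hQpos θ ϑ z 𝔲 k

/-- The map `φ*` is an involution of
`X = Θ² × Z × Uᴺ × {1,…,N} × {1,2}`, and for every `ξ = (θ,ϑ,z,𝔲,k,c) ∈ X`,
`D(φ*(ξ)) = r̊(ξ) · D(ξ)`; in particular the Metropolis–Hastings acceptance ratio of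
the MHAAR update equals the averaged acceptance ratio `r^N_𝔲(θ,ϑ,z)` when `c = 1` and
its reciprocal at the transformed point when `c = 2`. -/
theorem mhaar_involution_and_acceptance_ratio
    [MeasurableSpace Θ] [MeasurableSpace Z] [MeasurableSpace U]
    (μΘ : Measure Θ) (μZ : Measure Z) (μU : Measure U)
    [SigmaFinite μΘ] [SigmaFinite μZ] [SigmaFinite μU]
    (N : ℕ) (hN : 1 ≤ N)
    (π : Θ → Z → ℝ) (hπm : Measurable fun p : Θ × Z => π p.1 p.2)
    (hπpos : ∀ θ z, 0 < π θ z)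
    (hπ1 : ∫ p, π p.1 p.2 ∂(μΘ.prod μZ) = 1)
    (q : Θ → Θ → ℝ) (hqm : Measurable fun p : Θ × Θ => q p.1 p.2)
    (hqpos : ∀ θ ϑ, 0 < q θ ϑ) (hq1 : ∀ θ, ∫ ϑ, q θ ϑ ∂μΘ = 1)
    (Q : Θ → Θ → Z → U → ℝ)
    (hQm : Measurable fun p : Θ × Θ × Z × U => Q p.1 p.2.1 p.2.2.1 p.2.2.2)
    (hQpos : ∀ θ ϑ z u, 0 < Q θ ϑ z u)
    (hQ1 : ∀ θ ϑ z, ∫ u, Q θ ϑ z u ∂μU = 1)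
    (φ : Θ → Θ → Z × U → Z × U)
    (hφm : ∀ θ ϑ, Measurable (φ θ ϑ))
    (hφinv : ∀ θ ϑ p, φ ϑ θ (φ θ ϑ p) = p)
    (hφmp : ∀ θ ϑ, MeasurePreserving (φ θ ϑ) (μZ.prod μU) (μZ.prod μU)) :
    (∀ ξ : Θ × Θ × Z × (Fin N → U) × Fin N × Fin 2,
        phiStar N φ (phiStar N φ ξ) = ξ) ∧
      (∀ ξ : Θ × Θ × Z × (Fin N → U) × Fin N × Fin 2,
        D N π q Q φ (phiStar N φ ξ) = rMHAAR N π q Q φ ξ * D N π q Q φ ξ) :=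
  mhaar_involution_and_acceptance_ratio_general N π hπpos q hqpos Q hQpos φ hφinv

end MHAAR
end

section
/- With the notation of the context, for every particle array v ∈ Z^{T·M} and every index path k ∈ {1,…,M}^T one has η(ϑ) C_ϑ q(ϑ,θ) · π_ϑ(v^{(k)}) · Φ_{θ,ϑ}(s_{1,k}(v)) · b_{θ,ϑ}(k | s_{1,k}(v)) = r_{𝟏,v}(θ,ϑ) · η(θ) C_θ q(θ,ϑ) · π_θ(v^{(𝟏)}) · Φ_{θ,ϑ}(v) · b^{(1)}_{θ,ϑ}(k | v). Consequently the Metropolis–Hastings acceptance ratio of the MHAAR-RB update for the multiple latent variable model equals the Rao–Blackwellised averaged ratio r_{𝟏,v}(θ,ϑ) when c = 1, and equals 1/r_{k,v}(ϑ,θ) when c = 2. -/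
/-!
Swapping the indices `1` and `k_t` permutes each slice `v_t`, so it leaves the normalising sums
of the selection probabilities unchanged: `b_{θ,ϑ}(k | s_{1,k}(v)) = b_{θ,ϑ}(𝟏 | v)`, and
`Φ_{θ,ϑ}(s_{1,k}(v))` is `∏_t ∏_i q_t(v_t^{(i)})` divided by `∏_t q_t(v_t^{(k_t)})` instead of
`∏_t q_t(v_t^{(1)})`. Since `b_{θ,ϑ}(· | v)` is a product distribution over index paths and
`r_{v^{(l)}, v^{(k)}}` factorises over `t`, the average `r_{l,v}` is a product over `t` of
one-dimensional averages. After these reductions both sides are `η(ϑ) q(ϑ,θ)` times a product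
over `t` of one and the same ratio of positive terms.
-/

open MeasureTheory Finset

namespace MHAARRB4

variable {Z : Type*}

/-- The path `v^{(k)}` extracted from the particle array `v`. -/
def pathOf (n m : ℕ) (v : Fin (n + 1) → Fin (m + 1) → Z)
    (k : Fin (n + 1) → Fin (m + 1)) : Fin (n + 1) → Z := fun t => v t (k t)

/-- The constant index path `𝟏`. -/
def onePath (n m : ℕ) : Fin (n + 1) → Fin (m + 1) := fun _ => 0

/-- The swap operator `s_{1,k}` exchanging, for each `t`, the coordinates `v_t^{(1)}`
and `v_t^{(k_t)}`. -/
def swapArr (n m : ℕ) (k : Fin (n + 1) → Fin (m + 1))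
    (v : Fin (n + 1) → Fin (m + 1) → Z) : Fin (n + 1) → Fin (m + 1) → Z :=
  fun t i => v t (Equiv.swap 0 (k t) i)

/-- The proposal density `Φ_{θ,ϑ}(v) = ∏_t ∏_{i≥2} q_{t,θ,ϑ}(v_t^{(i)})`. -/
noncomputable def Phi (n m : ℕ) (qp : Fin (n + 1) → Z → ℝ)
    (v : Fin (n + 1) → Fin (m + 1) → Z) : ℝ :=
  ∏ t, ∏ i ∈ univ.erase (0 : Fin (m + 1)), qp t (v t i)

/-- Selection probabilities of the form
`∏_t [γ_t(v_t^{(k_t)})/q_t(v_t^{(k_t)})] / [∑_j γ_t(v_t^{(j)})/q_t(v_t^{(j)})]`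
(this gives `b_{θ,ϑ}` for `γ = γ_{θ,ϑ}` and `b^{(1)}_{θ,ϑ}` for `γ = γ_ϑ`). -/
noncomputable def bSel (n m : ℕ) (γ qp : Fin (n + 1) → Z → ℝ)
    (k : Fin (n + 1) → Fin (m + 1)) (v : Fin (n + 1) → Fin (m + 1) → Z) : ℝ :=
  ∏ t, (γ t (v t (k t)) / qp t (v t (k t))) / (∑ j, γ t (v t j) / qp t (v t j))

/-- The acceptance ratio `r_{z,z'}(θ,ϑ)`. -/
noncomputable def accRatio (n : ℕ) (ηθ ηϑ qθϑ qϑθ : ℝ)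
    (γθ γϑ γθϑ : Fin (n + 1) → Z → ℝ) (z z' : Fin (n + 1) → Z) : ℝ :=
  qϑθ * ηϑ / (qθϑ * ηθ) *
    ∏ t, (γθϑ t (z t) / γθ t (z t)) * (γϑ t (z' t) / γθϑ t (z' t))

/-- The Rao–Blackwellised averaged ratio `r_{l,v}(θ,ϑ) = ∑_k b_{θ,ϑ}(k|v) r_{v^{(l)},v^{(k)}}(θ,ϑ)`. -/
noncomputable def rBar (n m : ℕ) (ηθ ηϑ qθϑ qϑθ : ℝ)
    (γθ γϑ γθϑ qp : Fin (n + 1) → Z → ℝ)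
    (l : Fin (n + 1) → Fin (m + 1)) (v : Fin (n + 1) → Fin (m + 1) → Z) : ℝ :=
  ∑ k : Fin (n + 1) → Fin (m + 1),
    bSel n m γθϑ qp k v *
      accRatio n ηθ ηϑ qθϑ qϑθ γθ γϑ γθϑ (pathOf n m v l) (pathOf n m v k)

/-- The normalised density `π_θ(z) = ∏_t γ_{t,θ}(z_t) / C_θ`. -/
noncomputable def piDen (n : ℕ) (γ : Fin (n + 1) → Z → ℝ) (C : ℝ)
    (z : Fin (n + 1) → Z) : ℝ := (∏ t, γ t (z t)) / C

section

variable {n m : ℕ}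

theorem phi_eq_prod_div (qp : Fin (n + 1) → Z → ℝ) (hqp : ∀ t z, qp t z ≠ 0)
    (v : Fin (n + 1) → Fin (m + 1) → Z) :
    Phi n m qp v = ∏ t, (∏ i, qp t (v t i)) / qp t (v t 0) :=
  prod_congr rfl fun t _ => by
    rw [eq_div_iff (hqp t _), prod_erase_mul univ _ (mem_univ 0)]

theorem phi_swapArr (qp : Fin (n + 1) → Z → ℝ) (hqp : ∀ t z, qp t z ≠ 0)
    (k : Fin (n + 1) → Fin (m + 1)) (v : Fin (n + 1) → Fin (m + 1) → Z) :
    Phi n m qp (swapArr n m k v) = ∏ t, (∏ i, qp t (v t i)) / qp t (v t (k t)) := by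
  rw [phi_eq_prod_div qp hqp]
  refine prod_congr rfl fun t _ => ?_
  simp only [swapArr, Equiv.swap_apply_left]
  rw [Equiv.prod_comp (Equiv.swap 0 (k t)) fun i => qp t (v t i)]

theorem bSel_swapArr (γ qp : Fin (n + 1) → Z → ℝ) (k : Fin (n + 1) → Fin (m + 1))
    (v : Fin (n + 1) → Fin (m + 1) → Z) :
    bSel n m γ qp k (swapArr n m k v) = bSel n m γ qp (onePath n m) v := by
  refine prod_congr rfl fun t _ => ?_
  simp only [swapArr, onePath, Equiv.swap_apply_right]
  rw [Equiv.sum_comp (Equiv.swap 0 (k t)) fun j => γ t (v t j) / qp t (v t j)]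

theorem rBar_eq_prod (ηθ ηϑ qθϑ qϑθ : ℝ) (γθ γϑ γθϑ qp : Fin (n + 1) → Z → ℝ)
    (hγθϑ : ∀ t z, γθϑ t z ≠ 0) (l : Fin (n + 1) → Fin (m + 1))
    (v : Fin (n + 1) → Fin (m + 1) → Z) :
    rBar n m ηθ ηϑ qθϑ qϑθ γθ γϑ γθϑ qp l v
      = qϑθ * ηϑ / (qθϑ * ηθ) * ∏ t, γθϑ t (v t (l t)) / γθ t (v t (l t)) *
          ((∑ j, γϑ t (v t j) / qp t (v t j)) / ∑ j, γθϑ t (v t j) / qp t (v t j)) := by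
  simp only [rBar, bSel, accRatio, pathOf]
  have hsummand : ∀ k : Fin (n + 1) → Fin (m + 1),
      (∏ t, γθϑ t (v t (k t)) / qp t (v t (k t)) / ∑ j, γθϑ t (v t j) / qp t (v t j)) *
          (qϑθ * ηϑ / (qθϑ * ηθ) * ∏ t, γθϑ t (v t (l t)) / γθ t (v t (l t)) *
            (γϑ t (v t (k t)) / γθϑ t (v t (k t))))
        = qϑθ * ηϑ / (qθϑ * ηθ) * ∏ t, γθϑ t (v t (l t)) / γθ t (v t (l t)) *
            (γϑ t (v t (k t)) / qp t (v t (k t)) / ∑ j, γθϑ t (v t j) / qp t (v t j)) := by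
    intro k
    rw [mul_left_comm, ← prod_mul_distrib]
    congr 1
    refine prod_congr rfl fun t _ => ?_
    have hγ := hγθϑ t (v t (k t))
    field_simp
  simp only [hsummand, ← mul_sum]
  congr 1
  simp only [sum_div, mul_sum, Fintype.prod_sum]

end

theorem mhaar_rb_acceptance_identity_general
    (n m : ℕ)
    (γθ γϑ γθϑ qp : Fin (n + 1) → Z → ℝ)
    (hγθ : ∀ t z, 0 < γθ t z) (hγϑ : ∀ t z, 0 < γϑ t z)
    (hγθϑ : ∀ t z, 0 < γθϑ t z) (hqp : ∀ t z, 0 < qp t z)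
    (ηθ ηϑ qθϑ qϑθ : ℝ)
    (hηθ : 0 < ηθ) (hqθϑ : 0 < qθϑ)
    (Cθ Cϑ : ℝ)
    (hCθpos : 0 < Cθ) (hCϑpos : 0 < Cϑ)
    (v : Fin (n + 1) → Fin (m + 1) → Z) (k : Fin (n + 1) → Fin (m + 1)) :
    ηϑ * Cϑ * qϑθ * piDen n γϑ Cϑ (pathOf n m v k) *
        Phi n m qp (swapArr n m k v) * bSel n m γθϑ qp k (swapArr n m k v)
      = rBar n m ηθ ηϑ qθϑ qϑθ γθ γϑ γθϑ qp (onePath n m) v *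
          (ηθ * Cθ * qθϑ * piDen n γθ Cθ (pathOf n m v (onePath n m)) *
            Phi n m qp v * bSel n m γϑ qp k v) := by
  have hqp0 : ∀ t z, qp t z ≠ 0 := fun t z => (hqp t z).ne'
  have hU : ∀ t, (∑ j, γϑ t (v t j) / qp t (v t j)) ≠ 0 := fun t =>
    (sum_pos (fun j _ => div_pos (hγϑ t _) (hqp t _)) univ_nonempty).ne'
  rw [bSel_swapArr, phi_swapArr qp hqp0, phi_eq_prod_div qp hqp0,
    rBar_eq_prod _ _ _ _ _ _ _ _ (fun t z => (hγθϑ t z).ne')]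
  simp only [piDen, bSel, pathOf, onePath]
  field_simp
  simp only [mul_assoc, ← prod_mul_distrib]
  congr 2
  refine prod_congr rfl fun t _ => ?_
  have hγ := (hγθ t (v t 0)).ne'
  have hUt := hU t
  field_simp

/-- For every particle array `v` and index path `k`,
`η(ϑ) C_ϑ q(ϑ,θ) π_ϑ(v^{(k)}) Φ_{θ,ϑ}(s_{1,k}(v)) b_{θ,ϑ}(k|s_{1,k}(v))
  = r_{𝟏,v}(θ,ϑ) · η(θ) C_θ q(θ,ϑ) π_θ(v^{(𝟏)}) Φ_{θ,ϑ}(v) b^{(1)}_{θ,ϑ}(k|v)`;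
consequently the MH acceptance ratio of the MHAAR-RB update equals `r_{𝟏,v}(θ,ϑ)`
when `c = 1` and `1/r_{k,v}(ϑ,θ)` when `c = 2`. (Here `T = n+1 ≥ 1`, `M = m+1 ≥ 1`.) -/
theorem mhaar_rb_acceptance_identity
    [MeasurableSpace Z] (ν : Measure Z) [SigmaFinite ν] (n m : ℕ)
    (γθ γϑ γθϑ qp : Fin (n + 1) → Z → ℝ)
    (hγθm : ∀ t, Measurable (γθ t)) (hγϑm : ∀ t, Measurable (γϑ t))
    (hγθϑm : ∀ t, Measurable (γθϑ t)) (hqpm : ∀ t, Measurable (qp t))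
    (hγθ : ∀ t z, 0 < γθ t z) (hγϑ : ∀ t z, 0 < γϑ t z)
    (hγθϑ : ∀ t z, 0 < γθϑ t z) (hqp : ∀ t z, 0 < qp t z)
    (ηθ ηϑ qθϑ qϑθ : ℝ)
    (hηθ : 0 < ηθ) (hηϑ : 0 < ηϑ) (hqθϑ : 0 < qθϑ) (hqϑθ : 0 < qϑθ)
    (Cθ Cϑ : ℝ)
    (hIθ : ∀ t, Integrable (γθ t) ν) (hIϑ : ∀ t, Integrable (γϑ t) ν)
    (hCθ : Cθ = ∏ t, ∫ z, γθ t z ∂ν) (hCϑ : Cϑ = ∏ t, ∫ z, γϑ t z ∂ν)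
    (hCθpos : 0 < Cθ) (hCϑpos : 0 < Cϑ)
    (v : Fin (n + 1) → Fin (m + 1) → Z) (k : Fin (n + 1) → Fin (m + 1)) :
    ηϑ * Cϑ * qϑθ * piDen n γϑ Cϑ (pathOf n m v k) *
        Phi n m qp (swapArr n m k v) * bSel n m γθϑ qp k (swapArr n m k v)
      = rBar n m ηθ ηϑ qθϑ qϑθ γθ γϑ γθϑ qp (onePath n m) v *
          (ηθ * Cθ * qθϑ * piDen n γθ Cθ (pathOf n m v (onePath n m)) *
            Phi n m qp v * bSel n m γϑ qp k v) :=
  mhaar_rb_acceptance_identity_general n m γθ γϑ γθϑ qp hγθ hγϑ hγθϑ hqp ηθ ηϑ qθϑ qϑθ hηθ hqθϑ Cθ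
    Cϑ hCθpos hCϑpos v k

end MHAARRB4
end
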